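/- If tier structure t is a refinement of tier structure t′ (meaning t′_a > t′_b implies t_a > t_b for all schools a, b), then every Nash equilibrium outcome of the tiered deferred acceptance mechanism under t is also a Nash equilibrium outcome of the tiered deferred acceptance mechanism under t′. -/

import Mathlib

set_option linter.unusedSectionVars false

namespace SchoolChoice

/-- A strict preference over `S ∪ {self}`, encoded by an injective ranking function on
`Option S`; `none` denotes being unmatched (the student himself), and a smaller rank
means more preferred. Injective rankings on a finite set are exactly strict linear orders. -/
structure Pref (S : Type) where
  rank : Option S → ℕ
  inj : Function.Injective rank

/-- Quotas together with strict priorities of the schools: `prank s` ranks the students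
at school `s`, a smaller rank meaning higher priority. -/
structure Prio (I S : Type) where
  quota : S → ℕ
  prank : S → I → ℕ
  inj : ∀ s, Function.Injective (prank s)

variable {I S : Type} [Fintype I] [Fintype S] [DecidableEq I] [DecidableEq S]

/-- `i` has strictly higher priority than `j` at school `s`. -/
def Prio.higher (E : Prio I S) (s : S) (i j : I) : Prop :=
  E.prank s i < E.prank s j

/-- A matching assigns to each student a school or himself (`none`). -/
abbrev Matching (I S : Type) := I → Option S

/-- The set of students assigned to school `s`. -/
def assigned (μ : Matching I S) (s : S) : Finset I :=
  Finset.univ.filter (fun i => μ i = some s)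

/-- Quotas are respected. -/
def Feasible (E : Prio I S) (μ : Matching I S) : Prop :=
  ∀ s, (assigned μ s).card ≤ E.quota s

/-- `(i, s)` is a blocking pair of `μ` with respect to preferences `R`:
`i` strictly prefers `s` to his assignment, and either `s` has an empty seat
(wastefulness) or some student assigned to `s` has lower priority than `i`
(justified envy). -/
def Blocks (E : Prio I S) (R : I → Pref S) (μ : Matching I S) (i : I) (s : S) : Prop :=
  (R i).rank (some s) < (R i).rank (μ i) ∧
    ((assigned μ s).card < E.quota s ∨ ∃ j, μ j = some s ∧ E.higher s i j)

/-- Individual rationality: every student weakly prefers his assignment to being unmatched. -/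
def IndivRat (R : I → Pref S) (μ : Matching I S) : Prop :=
  ∀ i, (R i).rank (μ i) ≤ (R i).rank none

/-- Non-wastefulness: no student prefers a school with an empty seat to his assignment. -/
def NonWasteful (E : Prio I S) (R : I → Pref S) (μ : Matching I S) : Prop :=
  ∀ i s, (R i).rank (some s) < (R i).rank (μ i) → E.quota s ≤ (assigned μ s).card

/-- Stability: feasible, individually rational, and no blocking pair
(no justified envy and non-wasteful). -/
def Stable (E : Prio I S) (R : I → Pref S) (μ : Matching I S) : Prop :=
  Feasible E μ ∧ IndivRat R μ ∧ ∀ i s, ¬ Blocks E R μ i s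

/-- The student-optimal stable matching for the (reported) preferences. -/
def StudentOptimal (E : Prio I S) (R : I → Pref S) (μ : Matching I S) : Prop :=
  Stable E R μ ∧ ∀ ν, Stable E R ν → ∀ i, (R i).rank (μ i) ≤ (R i).rank (ν i)

open Classical in
/-- The student-proposing deferred acceptance mechanism: by the Gale–Shapley theorem its
outcome is the (unique) student-optimal stable matching of the reported preferences. -/
noncomputable def DA (E : Prio I S) (R : I → Pref S) : Matching I S :=
  if h : ∃ μ, StudentOptimal E R μ then h.choose else fun _ => none

/-- A strict upper bound for the values of a ranking. -/
noncomputable def bnd (p : Pref S) : ℕ := (Finset.univ.sup p.rank) + 1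

lemma rank_lt_bnd (p : Pref S) (x : Option S) : p.rank x < bnd p :=
  Nat.lt_succ_of_le (Finset.le_sup (Finset.mem_univ x))

private lemma mul_add_lt {a K B r : ℕ} (ha : a ≤ K) (hr : r < B) :
    a * B + r < (K + 1) * B := by
  calc a * B + r < a * B + B := by omega
    _ = (a + 1) * B := by ring
    _ ≤ (K + 1) * B := Nat.mul_le_mul (by omega) le_rfl

/-- Is an alternative "inside the market" `A`?  `none` always is. -/
def goodB (A : S → Prop) [DecidablePred A] : Option S → Bool
  | none => true
  | some s => decide (A s)

/-- The preference truncated to the set of schools `A`: schools in `A` (and the outside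
option `none`) keep their relative order, while all schools outside `A` are pushed below
`none` (become unacceptable), keeping their relative order among themselves. -/
noncomputable def trunc (A : S → Prop) [DecidablePred A] (p : Pref S) : Pref S where
  rank x := (if goodB A x then 0 else bnd p) + p.rank x
  inj := by
    intro x y h
    by_cases hx : goodB A x <;> by_cases hy : goodB A y <;>
      simp only [hx, hy, if_true, if_false, Bool.false_eq_true, zero_add] at h
    · exact p.inj h
    · have := rank_lt_bnd p x; omega
    · have := rank_lt_bnd p y; omega
    · exact p.inj (by omega)

/-- The reshuffled preference with respect to a tier structure `t`: acceptable schools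
are grouped by tier in increasing tier order (keeping the original relative order within
each tier) above `none`, and all unacceptable schools are placed below `none`. -/
noncomputable def reshuffle (t : S → ℕ) (p : Pref S) : Pref S where
  rank x :=
    Option.elim x ((Finset.univ.sup t + 1) * bnd p)
      (fun s =>
        if p.rank (some s) < p.rank none then t s * bnd p + p.rank (some s)
        else (Finset.univ.sup t + 1) * bnd p + 1 + p.rank (some s))
  inj := by
    have hB : ∀ x, p.rank x < bnd p := rank_lt_bnd p
    have hK : ∀ s : S, t s ≤ Finset.univ.sup t := fun s => Finset.le_sup (Finset.mem_univ s)
    intro x y h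
    rcases x with _ | s <;> rcases y with _ | s' <;>
      simp only [Option.elim_none, Option.elim_some] at h
    · rfl
    · by_cases hy : p.rank (some s') < p.rank none <;> simp only [hy, if_true, if_false] at h
      · have := mul_add_lt (hK s') (hB (some s')); omega
      · omega
    · by_cases hx : p.rank (some s) < p.rank none <;> simp only [hx, if_true, if_false] at h
      · have := mul_add_lt (hK s) (hB (some s)); omega
      · omega
    · by_cases hx : p.rank (some s) < p.rank none <;>
        by_cases hy : p.rank (some s') < p.rank none <;>
        simp only [hx, hy, if_true, if_false] at h
      · have hts : t s = t s' := by
          rcases Nat.lt_trichotomy (t s) (t s') with h1 | h1 | h1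
          · have h2 : t s * bnd p + p.rank (some s) < t s' * bnd p + p.rank (some s') := by
              have h3 := mul_add_lt (a := t s) (K := t s' - 1) (B := bnd p) (by omega) (hB (some s))
              have h4 : (t s' - 1 + 1) * bnd p = t s' * bnd p := by congr 1; omega
              omega
            omega
          · exact h1
          · have h2 : t s' * bnd p + p.rank (some s') < t s * bnd p + p.rank (some s) := by
              have h3 := mul_add_lt (a := t s') (K := t s - 1) (B := bnd p) (by omega) (hB (some s'))
              have h4 : (t s - 1 + 1) * bnd p = t s * bnd p := by congr 1; omega
              omega
            omega
        rw [hts] at h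
        exact p.inj (by omega)
      · have := mul_add_lt (hK s) (hB (some s)); omega
      · have := mul_add_lt (hK s') (hB (some s')); omega
      · exact p.inj (by omega)

/-- A tier structure assigning each school a tier in `{1, …, T}`, each tier nonempty. -/
def IsTierStructure (t : S → ℕ) (T : ℕ) : Prop :=
  (∀ s, 1 ≤ t s ∧ t s ≤ T) ∧ ∀ k, 1 ≤ k → k ≤ T → ∃ s, t s = k

/-- Rounds `1, …, k` of the tiered deferred acceptance mechanism: in round `k` the
students left unmatched so far participate in the DA mechanism with their preferences
truncated to the tier-`k` schools (already matched students participate with nothing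
acceptable); students matched in earlier rounds keep their assignments. -/
noncomputable def TDAaux (E : Prio I S) (t : S → ℕ) (Q : I → Pref S) : ℕ → Matching I S
  | 0 => fun _ => none
  | k + 1 => fun i =>
      match TDAaux E t Q k i with
      | some s => some s
      | none =>
          DA E (fun j =>
            if TDAaux E t Q k j = none then trunc (fun s => t s = k + 1) (Q j)
            else trunc (fun _ => False) (Q j)) i

/-- The tiered deferred acceptance mechanism under tier structure `t`. -/
noncomputable def TDA (E : Prio I S) (t : S → ℕ) (Q : I → Pref S) : Matching I S :=
  TDAaux E t Q (Finset.univ.sup t)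

/-- `Q` is a (pure) Nash equilibrium of the preference revelation game induced by the
mechanism `f` when the true preferences are `R`: no student can obtain a school he truly
strictly prefers by unilaterally changing his report. -/
def NashEq (R : I → Pref S) (f : (I → Pref S) → Matching I S) (Q : I → Pref S) : Prop :=
  ∀ (i : I) (Qi' : Pref S),
    (R i).rank (f Q i) ≤ (R i).rank (f (Function.update Q i Qi') i)

/-- `μ` is a Nash equilibrium outcome of the revelation game induced by `f` at true
preferences `R`. -/
def NashOutcome (R : I → Pref S) (f : (I → Pref S) → Matching I S) (μ : Matching I S) : Prop :=
  ∃ Q, NashEq R f Q ∧ f Q = μ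

/-- The preference `p` is aligned with the tier structure `t`: a (weakly) more preferred
school always lies in a weakly earlier tier. -/
def AlignedPref (t : S → ℕ) (p : Pref S) : Prop :=
  ∀ s s' : S, p.rank (some s) ≤ p.rank (some s') → t s ≤ t s'

/-- `p` lists exactly the school in `o` (if any) as acceptable. -/
def OnlyAcceptable (p : Pref S) (o : Option S) : Prop :=
  ∀ s : S, (p.rank (some s) < p.rank none ↔ o = some s)

/-- An Ergin cycle of the priority structure among the schools in `A`. -/
def Cycle (E : Prio I S) (A : S → Prop) : Prop :=
  ∃ a b : S, A a ∧ A b ∧ a ≠ b ∧ ∃ i j k : I,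
    E.higher a i j ∧ E.higher a j k ∧ E.higher b k i ∧
    ∃ Ia Ib : Finset I, Disjoint Ia Ib ∧
      (∀ l ∈ Ia, l ≠ i ∧ l ≠ j ∧ l ≠ k ∧ E.higher a l j) ∧
      (∀ l ∈ Ib, l ≠ i ∧ l ≠ j ∧ l ≠ k ∧ E.higher b l i) ∧
      Ia.card = E.quota a - 1 ∧ Ib.card = E.quota b - 1

/-- Within-tier acyclicity of a generalized priority structure: no Ergin cycle among the
schools of any single tier. -/
def WithinTierAcyclic (E : Prio I S) (t : S → ℕ) : Prop :=
  ∀ k : ℕ, ¬ Cycle E (fun s => t s = k)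

/-- The (strict) preference `pr` of school `s` over sets of students is a responsive
extension of its priorities. -/
def Responsive (E : Prio I S) (s : S) (pr : Finset I → Finset I → Prop) : Prop :=
  ∀ (J : Finset I) (i j : I), i ∉ J → j ∉ J → E.higher s i j →
    pr (insert i J) (insert j J)

/-- `t` is a refinement of `t'`: `t'` ranks `a` in a strictly later tier than `b` only
if `t` does. -/
def Refines (t t' : S → ℕ) : Prop :=
  ∀ a b : S, t' b < t' a → t b < t a

/-!
Given an equilibrium `Q` of TDA under `t`, let every student reorder his report so that his
acceptable schools are listed tier by tier of `t` (`reshuffle`). TDA under `t` only uses the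
order within each tier, so the outcome is still `μ`. On reports aligned with `t`, TDA under the
coarser `t'` performs exactly the rounds of TDA under `t`: a DA round over two blocks of
schools that every student ranks one above the other is a round over the first block followed
by a round over the second for the students left unmatched. Finally, a student who obtains
`s₀` by some deviation under `t'` also obtains it by reporting only `s₀`: until the tier of
`s₀` this merely withdraws him from the competition, which leaves everybody else weakly better
off, so `s₀` is still within his reach in its round. That report is aligned with `t`, so it is
a deviation under `t` as well, where it is not profitable.
-/

open Finset Function

namespace Pref

variable (p : Pref S)

def Acceptable (s : S) : Prop := p.rank (some s) < p.rank none

def AcceptsNothing : Prop := ∀ s, ¬ p.Acceptable s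

variable {p}

lemma acceptable_iff_rank_le {s : S} : p.Acceptable s ↔ p.rank (some s) ≤ p.rank none :=
  ⟨le_of_lt, fun h => h.lt_of_ne (p.inj.ne (Option.some_ne_none s))⟩

lemma eq_none_of_rank_none_le {x : Option S} (hx : p.rank x ≤ p.rank none)
    (h : p.rank none ≤ p.rank x) : x = none :=
  p.inj (le_antisymm hx h)

lemma rank_lt_of_le_of_ne {x y : Option S} (h : p.rank x ≤ p.rank y) (hne : x ≠ y) :
    p.rank x < p.rank y :=
  h.lt_of_ne (p.inj.ne hne)

/-- The options a student can still obtain once every school of rank `< n` has rejected him. -/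
def IsOpen (p : Pref S) (n : ℕ) (x : Option S) : Prop :=
  p.rank x ≤ p.rank none ∧ ∀ s ∈ x, n ≤ p.rank (some s)

open Classical in
noncomputable def favorite (p : Pref S) (n : ℕ) : Option S :=
  Classical.choose ((univ.filter (p.IsOpen n)).exists_min_image p.rank
    ⟨none, mem_filter.2 ⟨mem_univ _, le_rfl, by simp⟩⟩)

lemma favorite_spec (n : ℕ) :
    p.IsOpen n (p.favorite n) ∧ ∀ x, p.IsOpen n x → p.rank (p.favorite n) ≤ p.rank x := by
  classical
  obtain ⟨hmem, hmin⟩ := Classical.choose_spec ((univ.filter (p.IsOpen n)).exists_min_image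
    p.rank ⟨none, mem_filter.2 ⟨mem_univ _, le_rfl, by simp⟩⟩)
  exact ⟨(mem_filter.1 hmem).2, fun x hx => hmin x (mem_filter.2 ⟨mem_univ x, hx⟩)⟩

lemma rank_favorite_le {n : ℕ} {x : Option S} (hx : p.IsOpen n x) :
    p.rank (p.favorite n) ≤ p.rank x :=
  (favorite_spec n).2 x hx

lemma rank_favorite_le_none (n : ℕ) : p.rank (p.favorite n) ≤ p.rank none :=
  (favorite_spec n).1.1

lemma favorite_eq_some {n : ℕ} {s : S} (h : p.favorite n = some s) :
    n ≤ p.rank (some s) ∧ p.Acceptable s := by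
  have hopen := (favorite_spec (p := p) n).1
  rw [h] at hopen
  exact ⟨hopen.2 s rfl, acceptable_iff_rank_le.2 hopen.1⟩

lemma favorite_eq_none_of_acceptsNothing (hp : p.AcceptsNothing) (n : ℕ) :
    p.favorite n = none := by
  cases h : p.favorite n with
  | none => rfl
  | some s => exact absurd (favorite_eq_some h).2 (hp s)

end Pref

section RejectionAlgorithm

/- A state `θ` of the student-proposing rejection algorithm records that student `i` has been
rejected by every school of rank `< θ i`; he currently applies to `(Q i).favorite (θ i)`. -/

variable (E : Prio I S) (Q : I → Pref S)

noncomputable def applicants (θ : I → ℕ) (s : S) : Finset I :=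
  univ.filter fun i => (Q i).favorite (θ i) = some s

open Classical in
noncomputable def rivals (θ : I → ℕ) (s : S) (i : I) : Finset I :=
  (applicants Q θ s).filter fun j => E.higher s j i

def RejectStep (θ θ' : I → ℕ) : Prop :=
  ∃ i s, (Q i).favorite (θ i) = some s ∧ E.quota s ≤ (rivals E Q θ s i).card ∧
    θ' = update θ i ((Q i).rank (some s) + 1)

def IsFinal (θ : I → ℕ) : Prop :=
  ∀ i s, (Q i).favorite (θ i) = some s → (rivals E Q θ s i).card < E.quota s

def NoStableRejected (θ : I → ℕ) : Prop :=
  ∀ ν, Stable E Q ν → ∀ i, θ i ≤ (Q i).rank (ν i)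

def RejectionsJustified (θ : I → ℕ) : Prop :=
  ∀ i s, (Q i).Acceptable s → (Q i).rank (some s) < θ i →
    E.quota s ≤ (rivals E Q θ s i).card

variable {E Q}

lemma mem_applicants {θ : I → ℕ} {s : S} {i : I} :
    i ∈ applicants Q θ s ↔ (Q i).favorite (θ i) = some s := by
  simp [applicants]

lemma mem_rivals {θ : I → ℕ} {s : S} {i j : I} :
    j ∈ rivals E Q θ s i ↔ (Q j).favorite (θ j) = some s ∧ E.higher s j i := by
  simp [rivals, mem_applicants]

lemma self_notMem_rivals {θ : I → ℕ} {s : S} {i : I} : i ∉ rivals E Q θ s i :=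
  fun h => lt_irrefl _ (mem_rivals.1 h).2

lemma Stable.isOpen {ν : Matching I S} (hν : Stable E Q ν) {θ : I → ℕ}
    (hθ : NoStableRejected E Q θ) (i : I) : (Q i).IsOpen (θ i) (ν i) :=
  ⟨hν.2.1 i, fun s hs => by simpa [Option.mem_def.1 hs] using hθ ν hν i⟩

lemma rivals_subset_assigned {θ : I → ℕ} (hθ : NoStableRejected E Q θ) {ν : Matching I S}
    (hν : Stable E Q ν) {i : I} {s : S} (hi : ν i = some s) :
    rivals E Q θ s i ⊆ assigned ν s := by
  intro k hk
  obtain ⟨hfav, hki⟩ := mem_rivals.1 hk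
  simp only [assigned, mem_filter, mem_univ, true_and]
  by_contra hne
  have hle := Pref.rank_favorite_le (hν.isOpen hθ k)
  rw [hfav] at hle
  exact hν.2.2 k s ⟨Pref.rank_lt_of_le_of_ne hle (Ne.symm hne), Or.inr ⟨i, hi, hki⟩⟩

lemma RejectStep.noStableRejected {θ θ' : I → ℕ} (hst : RejectStep E Q θ θ')
    (hθ : NoStableRejected E Q θ) : NoStableRejected E Q θ' := by
  obtain ⟨i, s, hfav, hquota, rfl⟩ := hst
  intro ν hν j
  rcases eq_or_ne j i with rfl | hji
  · rw [update_self]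
    have hle := Pref.rank_favorite_le (hν.isOpen hθ j)
    rw [hfav] at hle
    suffices hne : some s ≠ ν j from Pref.rank_lt_of_le_of_ne hle hne
    intro hj
    -- all rivals of `j` sit at `s` together with `j`, which overflows the quota
    have hsub : insert j (rivals E Q θ s j) ⊆ assigned ν s :=
      insert_subset (by simp [assigned, hj]) (rivals_subset_assigned hθ hν hj.symm)
    have := (card_le_card hsub).trans (hν.1 s)
    rw [card_insert_of_notMem self_notMem_rivals] at this
    omega
  · rw [update_of_ne hji]
    exact hθ ν hν j

lemma rivals_subset_rivals_update {θ : I → ℕ} {k j i : I} {s : S} {v : ℕ}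
    (hk : k ∉ rivals E Q θ s j) (hji : ∀ l, E.higher s l j → E.higher s l i) :
    rivals E Q θ s j ⊆ rivals E Q (update θ k v) s i := by
  intro l hl
  have hlk : l ≠ k := fun h => hk (h ▸ hl)
  obtain ⟨hfav, hlj⟩ := mem_rivals.1 hl
  exact mem_rivals.2 ⟨by rwa [update_of_ne hlk], hji l hlj⟩

lemma RejectStep.rejectionsJustified {θ θ' : I → ℕ} (hst : RejectStep E Q θ θ')
    (hθ : RejectionsJustified E Q θ) : RejectionsJustified E Q θ' := by
  obtain ⟨k, y, hfav, hquota, rfl⟩ := hst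
  have hky : E.quota y ≤ (rivals E Q (update θ k ((Q k).rank (some y) + 1)) y k).card :=
    hquota.trans (card_le_card (rivals_subset_rivals_update self_notMem_rivals fun _ h => h))
  intro i s hacc hrank
  rcases eq_or_ne i k with rfl | hik
  · rw [update_self] at hrank
    rcases lt_or_ge ((Q i).rank (some s)) (θ i) with hold | hnew
    · exact (hθ i s hacc hold).trans (card_le_card
        (rivals_subset_rivals_update self_notMem_rivals fun _ h => h))
    · -- `s` was still open, so it is the school `y` that just rejected `i`
      have hle := Pref.rank_favorite_le (p := Q i) (x := some s)
        ⟨hacc.le, fun s' hs' => by cases hs'; exact hnew⟩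
      rw [hfav] at hle
      obtain rfl : s = y := Option.some_injective _ ((Q i).inj (by omega))
      exact hky
  · rw [update_of_ne hik] at hrank
    by_cases hk : k ∈ rivals E Q θ s i
    · obtain ⟨hfavk, hki⟩ := mem_rivals.1 hk
      rw [hfav] at hfavk
      obtain rfl := Option.some_injective _ hfavk
      exact hquota.trans (card_le_card
        (rivals_subset_rivals_update self_notMem_rivals fun _ h => lt_trans h hki))
    · exact (hθ i s hacc hrank).trans (card_le_card
        (rivals_subset_rivals_update hk fun _ h => h))

lemma IsFinal.card_applicants_le {θ : I → ℕ} (hfin : IsFinal E Q θ) (s : S) :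
    (applicants Q θ s).card ≤ E.quota s := by
  by_contra! hgt
  obtain ⟨i, hi, hmax⟩ := (applicants Q θ s).exists_max_image (E.prank s)
    (card_pos.1 (by omega))
  have hsub : (applicants Q θ s).erase i ⊆ rivals E Q θ s i := by
    intro j hj
    obtain ⟨hji, hj⟩ := mem_erase.1 hj
    exact mem_rivals.2 ⟨mem_applicants.1 hj,
      (hmax j hj).lt_of_ne fun h => hji (E.inj s h)⟩
  have := card_le_card hsub
  rw [card_erase_of_mem hi] at this
  have := hfin i s (mem_applicants.1 hi)
  omega

lemma stable_of_isFinal {θ : I → ℕ} (hjust : RejectionsJustified E Q θ)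
    (hfin : IsFinal E Q θ) : Stable E Q fun i => (Q i).favorite (θ i) := by
  have hass : ∀ s, assigned (fun i => (Q i).favorite (θ i)) s = applicants Q θ s :=
    fun _ => rfl
  refine ⟨fun s => (hass s).symm ▸ hfin.card_applicants_le s,
    fun i => Pref.rank_favorite_le_none _, ?_⟩
  rintro i s ⟨hpref, hcond⟩
  have hacc : (Q i).Acceptable s := hpref.trans_le (Pref.rank_favorite_le_none _)
  have hrej : (Q i).rank (some s) < θ i := by
    by_contra! hopen
    have := Pref.rank_favorite_le (p := Q i) (x := some s)
      ⟨le_of_lt hacc, fun s' hs' => by cases hs'; exact hopen⟩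
    exact lt_irrefl _ (hpref.trans_le this)
  -- `s` is full of applicants that all have higher priority than `i`
  have hfull : rivals E Q θ s i = applicants Q θ s :=
    eq_of_subset_of_card_le (fun j hj => mem_applicants.2 (mem_rivals.1 hj).1)
      ((hfin.card_applicants_le s).trans (hjust i s hacc hrej))
  rcases hcond with hvac | ⟨j, hj, hij⟩
  · rw [hass, ← hfull] at hvac
    have := hjust i s hacc hrej
    omega
  · have hj' : j ∈ rivals E Q θ s i := hfull ▸ mem_applicants.2 hj
    exact lt_asymm hij (mem_rivals.1 hj').2

lemma RejectStep.le_apply {θ θ' : I → ℕ} (hst : RejectStep E Q θ θ') (i : I) :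
    θ i ≤ θ' i := by
  obtain ⟨j, s, hfav, -, rfl⟩ := hst
  rcases eq_or_ne i j with rfl | hij
  · rw [update_self]
    have := (Pref.favorite_eq_some hfav).1
    omega
  · rw [update_of_ne hij]

lemma RejectStep.potential_lt {θ θ' : I → ℕ} (hst : RejectStep E Q θ θ') :
    ∑ j, (bnd (Q j) - θ' j) < ∑ j, (bnd (Q j) - θ j) := by
  obtain ⟨i, s, hfav, -, rfl⟩ := hst
  have hlow := (Pref.favorite_eq_some hfav).1
  have hup := rank_lt_bnd (Q i) (some s)
  refine sum_lt_sum (fun j _ => ?_) ⟨i, mem_univ i, ?_⟩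
  · rcases eq_or_ne j i with rfl | hji
    · rw [update_self]; omega
    · rw [update_of_ne hji]
  · rw [update_self]; omega

variable (E Q) in
lemma exists_isFinal (θ₀ : I → ℕ) :
    ∃ θ, Relation.ReflTransGen (RejectStep E Q) θ₀ θ ∧ IsFinal E Q θ := by
  induction h : ∑ j, (bnd (Q j) - θ₀ j) using Nat.strong_induction_on generalizing θ₀ with
  | _ n ih =>
    by_cases hfin : IsFinal E Q θ₀
    · exact ⟨θ₀, Relation.ReflTransGen.refl, hfin⟩
    · simp only [IsFinal, not_forall, not_lt] at hfin
      obtain ⟨i, s, hfav, hquota⟩ := hfin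
      have hst : RejectStep E Q θ₀ _ := ⟨i, s, hfav, hquota, rfl⟩
      obtain ⟨θ, hreach, hθ⟩ := ih _ (h ▸ hst.potential_lt) _ rfl
      exact ⟨θ, Relation.ReflTransGen.head hst hreach, hθ⟩

lemma invariants_of_reachable {θ : I → ℕ}
    (hreach : Relation.ReflTransGen (RejectStep E Q) 0 θ) :
    NoStableRejected E Q θ ∧ RejectionsJustified E Q θ := by
  induction hreach with
  | refl => exact ⟨fun _ _ _ => Nat.zero_le _, fun _ _ _ h => absurd h (Nat.not_lt_zero _)⟩
  | tail _ hst ih => exact ⟨hst.noStableRejected ih.1, hst.rejectionsJustified ih.2⟩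

lemma studentOptimal_of_isFinal {θ : I → ℕ}
    (hreach : Relation.ReflTransGen (RejectStep E Q) 0 θ) (hfin : IsFinal E Q θ) :
    StudentOptimal E Q fun i => (Q i).favorite (θ i) := by
  have hinv := invariants_of_reachable hreach
  exact ⟨stable_of_isFinal hinv.2 hfin,
    fun ν hν i => Pref.rank_favorite_le (hν.isOpen hinv.1 i)⟩

lemma StudentOptimal.unique {μ ν : Matching I S} (hμ : StudentOptimal E Q μ)
    (hν : StudentOptimal E Q ν) : μ = ν :=
  funext fun i => (Q i).inj (le_antisymm (hμ.2 ν hν.1 i) (hν.2 μ hμ.1 i))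

variable (E Q) in
theorem DA_studentOptimal : StudentOptimal E Q (DA E Q) := by
  have hex : ∃ μ, StudentOptimal E Q μ := by
    obtain ⟨θ, hreach, hfin⟩ := exists_isFinal E Q 0
    exact ⟨_, studentOptimal_of_isFinal hreach hfin⟩
  rw [DA, dif_pos hex]
  exact hex.choose_spec

variable (E Q) in
lemma DA_stable : Stable E Q (DA E Q) := (DA_studentOptimal E Q).1

lemma rank_DA_le {ν : Matching I S} (hν : Stable E Q ν) (i : I) :
    (Q i).rank (DA E Q i) ≤ (Q i).rank (ν i) :=
  (DA_studentOptimal E Q).2 ν hν i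

lemma DA_eq_of_isFinal {θ : I → ℕ} (hreach : Relation.ReflTransGen (RejectStep E Q) 0 θ)
    (hfin : IsFinal E Q θ) : DA E Q = fun i => (Q i).favorite (θ i) :=
  (DA_studentOptimal E Q).unique (studentOptimal_of_isFinal hreach hfin)

lemma DA_eq_none_of_acceptsNothing {i : I} (h : (Q i).AcceptsNothing) : DA E Q i = none := by
  cases hi : DA E Q i with
  | none => rfl
  | some s =>
    have := (DA_stable E Q).2.1 i
    rw [hi] at this
    exact absurd (Pref.acceptable_iff_rank_le.2 this) (h s)

end RejectionAlgorithm

section Silencing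

variable {E : Prio I S} {P P' : I → Pref S}

def Silences (P P' : I → Pref S) : Prop := ∀ j, P j = P' j ∨ (P j).AcceptsNothing

lemma Silences.eq_of_favorite_eq_some (h : Silences P P') {θ : I → ℕ} {j : I} {s : S}
    (hj : (P j).favorite (θ j) = some s) : P j = P' j :=
  (h j).resolve_right fun hn => by
    rw [Pref.favorite_eq_none_of_acceptsNothing hn] at hj
    cases hj

lemma Silences.rejectStep (h : Silences P P') {θ θ' : I → ℕ} (hst : RejectStep E P θ θ') :
    RejectStep E P' θ θ' := by
  obtain ⟨i, s, hfav, hquota, rfl⟩ := hst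
  have hsub : rivals E P θ s i ⊆ rivals E P' θ s i := by
    intro j hj
    obtain ⟨hfavj, hji⟩ := mem_rivals.1 hj
    exact mem_rivals.2 ⟨h.eq_of_favorite_eq_some hfavj ▸ hfavj, hji⟩
  have hPi := h.eq_of_favorite_eq_some hfav
  exact ⟨i, s, hPi ▸ hfav, hquota.trans (card_le_card hsub), by rw [hPi]⟩

/-- The rejections made in the silenced market are also valid in the original one, and
continuing the algorithm from there only raises the thresholds. -/
theorem Silences.rank_DA_le (h : Silences P P') {j : I} (hj : P j = P' j) :
    (P j).rank (DA E P j) ≤ (P j).rank (DA E P' j) := by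
  obtain ⟨θ, hreach, hfin⟩ := exists_isFinal E P 0
  obtain ⟨θ', hreach', hfin'⟩ := exists_isFinal E P' θ
  have hmono : θ j ≤ θ' j := by
    clear hfin'
    induction hreach' with
    | refl => exact le_rfl
    | tail _ hst ih => exact ih.trans (hst.le_apply j)
  have hreach'' : Relation.ReflTransGen (RejectStep E P') 0 θ' :=
    (Relation.ReflTransGen.mono (fun _ _ => h.rejectStep) _ _ hreach).trans hreach'
  rw [DA_eq_of_isFinal hreach hfin, DA_eq_of_isFinal hreach'' hfin']
  dsimp only
  rw [hj]
  refine Pref.rank_favorite_le ⟨Pref.rank_favorite_le_none _, fun s hs => ?_⟩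
  exact hmono.trans (Pref.favorite_eq_some (Option.mem_def.1 hs)).1

end Silencing

namespace Pref

/-- All that stability depends on: the acceptable schools, and the order of the options
weakly preferred to being unmatched. -/
def Equivalent (p p' : Pref S) : Prop :=
  (∀ s, p.Acceptable s ↔ p'.Acceptable s) ∧
    ∀ x y, p.rank x ≤ p.rank none → p.rank y ≤ p.rank none →
      (p.rank x ≤ p.rank y ↔ p'.rank x ≤ p'.rank y)

variable {p p' : Pref S}

lemma Equivalent.rank_le_none_iff (h : p.Equivalent p') {x : Option S} :
    p.rank x ≤ p.rank none ↔ p'.rank x ≤ p'.rank none := by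
  cases x with
  | none => simp
  | some s => simpa only [acceptable_iff_rank_le] using h.1 s

lemma Equivalent.symm (h : p.Equivalent p') : p'.Equivalent p :=
  ⟨fun s => (h.1 s).symm, fun x y hx hy =>
    (h.2 x y (h.rank_le_none_iff.2 hx) (h.rank_le_none_iff.2 hy)).symm⟩

lemma Equivalent.rank_lt_iff (h : p.Equivalent p') {x y : Option S}
    (hx : p.rank x ≤ p.rank none) (hy : p.rank y ≤ p.rank none) :
    p.rank x < p.rank y ↔ p'.rank x < p'.rank y := by
  rw [lt_iff_not_ge, lt_iff_not_ge, h.2 y x hy hx]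

lemma equivalent_of_acceptsNothing (hp : p.AcceptsNothing) (hp' : p'.AcceptsNothing) :
    p.Equivalent p' := by
  have hnone : ∀ {q : Pref S}, q.AcceptsNothing → ∀ {x}, q.rank x ≤ q.rank none →
      x = none :=
    fun hq x hx => by
      cases x with
      | none => rfl
      | some s => exact absurd (acceptable_iff_rank_le.2 hx) (hq s)
  refine ⟨fun s => iff_of_false (hp s) (hp' s), fun x y hx hy => ?_⟩
  rw [hnone hp hx, hnone hp hy]
  simp

end Pref

section Equivalence

variable {E : Prio I S}

lemma Stable.of_equivalent {P P' : I → Pref S} (h : ∀ j, (P j).Equivalent (P' j))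
    {μ : Matching I S} (hμ : Stable E P μ) : Stable E P' μ := by
  obtain ⟨hfeas, hIR, hnb⟩ := hμ
  refine ⟨hfeas, fun i => (h i).rank_le_none_iff.1 (hIR i), ?_⟩
  rintro i s ⟨hpref, hcond⟩
  have hacc : (P i).rank (some s) ≤ (P i).rank none :=
    (h i).rank_le_none_iff.2 (hpref.le.trans ((h i).rank_le_none_iff.1 (hIR i)))
  exact hnb i s ⟨((h i).rank_lt_iff hacc (hIR i)).2 hpref, hcond⟩

lemma DA_congr {P P' : I → Pref S} (h : ∀ j, (P j).Equivalent (P' j)) : DA E P = DA E P' := by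
  have hopt : StudentOptimal E P' (DA E P) := by
    refine ⟨(DA_stable E P).of_equivalent h, fun ν hν i => ?_⟩
    have hν' := hν.of_equivalent fun j => (h j).symm
    exact ((h i).2 _ _ ((DA_stable E P).2.1 i) (hν'.2.1 i)).1 (rank_DA_le hν' i)
  exact hopt.unique (DA_studentOptimal E P')

end Equivalence

section Truncation

variable {A : S → Prop} [DecidablePred A]

@[simp] lemma goodB_none : goodB A none = true := rfl

@[simp] lemma goodB_some {s : S} : goodB A (some s) = true ↔ A s := by
  simp [goodB]

lemma trunc_rank_of_goodB (p : Pref S) {x : Option S} (hx : goodB A x = true) :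
    (trunc A p).rank x = p.rank x := by
  simp [trunc, hx]

lemma trunc_rank_none (p : Pref S) : (trunc A p).rank none = p.rank none :=
  trunc_rank_of_goodB p goodB_none

lemma acceptable_trunc_iff {p : Pref S} {s : S} :
    (trunc A p).Acceptable s ↔ A s ∧ p.Acceptable s := by
  by_cases hA : A s
  · simp only [Pref.Acceptable, trunc_rank_none, trunc_rank_of_goodB p (goodB_some.2 hA), hA,
      true_and]
  · have := rank_lt_bnd p none
    simp only [Pref.Acceptable, trunc, goodB, hA, decide_false, Bool.false_eq_true, if_false,
      false_and, iff_false, if_true, zero_add]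
    omega

lemma goodB_of_trunc_rank_le {p : Pref S} {x : Option S}
    (h : (trunc A p).rank x ≤ (trunc A p).rank none) : goodB A x = true := by
  cases x with
  | none => rfl
  | some s => exact goodB_some.2 (acceptable_trunc_iff.1 (Pref.acceptable_iff_rank_le.2 h)).1

lemma trunc_acceptsNothing {p : Pref S} (h : ∀ s, A s → ¬ p.Acceptable s) :
    (trunc A p).AcceptsNothing :=
  fun s hs => h s (acceptable_trunc_iff.1 hs).1 (acceptable_trunc_iff.1 hs).2

lemma trunc_false_acceptsNothing (p : Pref S) : (trunc (fun _ => False) p).AcceptsNothing :=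
  trunc_acceptsNothing fun _ h => h.elim

lemma trunc_congr {B : S → Prop} [DecidablePred B] (hAB : ∀ s, A s ↔ B s) (p : Pref S) :
    trunc A p = trunc B p := by
  obtain rfl : A = B := funext fun s => propext (hAB s)
  congr

def AgreeOn (A : S → Prop) [DecidablePred A] (p p' : Pref S) : Prop :=
  ∀ x y, goodB A x = true → goodB A y = true →
    (p.rank x ≤ p.rank y ↔ p'.rank x ≤ p'.rank y)

lemma AgreeOn.refl (p : Pref S) : AgreeOn A p p := fun _ _ _ _ => Iff.rfl

lemma AgreeOn.trunc_equivalent {p p' : Pref S} (h : AgreeOn A p p') :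
    (trunc A p).Equivalent (trunc A p') := by
  refine ⟨fun s => ?_, fun x y hx hy => ?_⟩
  · rw [acceptable_trunc_iff, acceptable_trunc_iff]
    refine and_congr_right fun hA => ?_
    simp only [Pref.acceptable_iff_rank_le]
    exact h _ _ (goodB_some.2 hA) goodB_none
  · have hgx := goodB_of_trunc_rank_le hx
    have hgy := goodB_of_trunc_rank_le hy
    rw [trunc_rank_of_goodB p hgx, trunc_rank_of_goodB p hgy, trunc_rank_of_goodB p' hgx,
      trunc_rank_of_goodB p' hgy]
    exact h x y hgx hgy

lemma agreeOn_update {P Q : I → Pref S} (h : ∀ j, AgreeOn A (P j) (Q j)) (i : I)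
    (p : Pref S) (j : I) : AgreeOn A (update P i p j) (update Q i p j) := by
  rcases eq_or_ne j i with rfl | hj
  · rw [update_self, update_self]
    exact AgreeOn.refl p
  · rw [update_of_ne hj, update_of_ne hj]
    exact h j

end Truncation

def TierAligned (t : S → ℕ) (p : Pref S) : Prop :=
  ∀ a b, p.Acceptable a → p.Acceptable b → t a < t b → p.rank (some a) < p.rank (some b)

lemma TierAligned.of_refines {t t' : S → ℕ} (href : Refines t t') {p : Pref S}
    (h : TierAligned t p) : TierAligned t' p :=
  fun a b ha hb hab => h a b ha hb (href b a hab)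

section Reshuffle

variable (t : S → ℕ) (p : Pref S)

lemma reshuffle_rank_of_acceptable {s : S} (h : p.Acceptable s) :
    (reshuffle t p).rank (some s) = t s * bnd p + p.rank (some s) :=
  if_pos h

lemma reshuffle_rank_of_not_acceptable {s : S} (h : ¬ p.Acceptable s) :
    (reshuffle t p).rank (some s) = (univ.sup t + 1) * bnd p + 1 + p.rank (some s) :=
  if_neg h

lemma reshuffle_rank_none : (reshuffle t p).rank none = (univ.sup t + 1) * bnd p := rfl

lemma tier_mul_add_lt (s : S) :
    t s * bnd p + p.rank (some s) < (univ.sup t + 1) * bnd p :=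
  mul_add_lt (le_sup (mem_univ s)) (rank_lt_bnd p (some s))

lemma acceptable_reshuffle_iff {s : S} : (reshuffle t p).Acceptable s ↔ p.Acceptable s := by
  by_cases h : p.Acceptable s
  · refine iff_of_true ?_ h
    rw [Pref.Acceptable, reshuffle_rank_of_acceptable t p h, reshuffle_rank_none]
    exact tier_mul_add_lt t p s
  · refine iff_of_false ?_ h
    rw [Pref.Acceptable, reshuffle_rank_of_not_acceptable t p h, reshuffle_rank_none]
    omega

lemma reshuffle_tierAligned : TierAligned t (reshuffle t p) := by
  intro a b ha hb hab
  rw [acceptable_reshuffle_iff] at ha hb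
  rw [reshuffle_rank_of_acceptable t p ha, reshuffle_rank_of_acceptable t p hb]
  have := Nat.mul_le_mul_right (bnd p) (show t a + 1 ≤ t b from hab)
  have := mul_add_lt (le_refl (t a)) (rank_lt_bnd p (some a))
  omega

lemma reshuffle_agreeOn (m : ℕ) : AgreeOn (fun s => t s = m) (reshuffle t p) p := by
  set top := (univ.sup t + 1) * bnd p
  -- on the schools of tier `m` and `none`, reshuffling is a strictly monotone relabelling
  have hrank : ∀ x, goodB (fun s => t s = m) x = true → (reshuffle t p).rank x =
      if p.rank x < p.rank none then m * bnd p + p.rank x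
      else if p.rank x = p.rank none then top else top + 1 + p.rank x := by
    rintro (_ | s) hs
    · simp [top, reshuffle_rank_none]
    · rw [goodB_some] at hs
      by_cases h : p.Acceptable s
      · rw [reshuffle_rank_of_acceptable t p h,
          if_pos (show p.rank (some s) < p.rank none from h), hs]
      · rw [reshuffle_rank_of_not_acceptable t p h,
          if_neg (show ¬ p.rank (some s) < p.rank none from h),
          if_neg (p.inj.ne (Option.some_ne_none s))]
  have hlt : ∀ x, goodB (fun s => t s = m) x = true → p.rank x < p.rank none →
      m * bnd p + p.rank x < top := by
    rintro (_ | s) hs h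
    · exact absurd h (lt_irrefl _)
    · rw [goodB_some] at hs
      exact hs ▸ tier_mul_add_lt t p s
  intro x y hx hy
  have hbx := hlt x hx
  have hby := hlt y hy
  rw [hrank x hx, hrank y hy]
  split_ifs <;> omega

end Reshuffle

section OnlyPref

noncomputable def onlyPref (s₀ : S) : Pref S where
  rank
    | none => 1
    | some s => if s = s₀ then 0 else 2 + (Fintype.equivFin S s : ℕ)
  inj := by
    rintro (_ | s) (_ | s') h <;> simp only at h
    · rfl
    · split_ifs at h; omega
    · split_ifs at h; omega
    · split_ifs at h with h₁ h₂ h₂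
      · rw [h₁, h₂]
      · omega
      · omega
      · exact congrArg some ((Fintype.equivFin S).injective (Fin.ext (by omega)))

lemma onlyPref_rank_self (s₀ : S) : (onlyPref s₀).rank (some s₀) = 0 := by
  simp [onlyPref]

lemma acceptable_onlyPref_iff {s₀ s : S} : (onlyPref s₀).Acceptable s ↔ s = s₀ := by
  by_cases h : s = s₀ <;> simp [Pref.Acceptable, onlyPref, h]

lemma onlyPref_tierAligned (t : S → ℕ) (s₀ : S) : TierAligned t (onlyPref s₀) := by
  intro a b ha hb hab
  rw [acceptable_onlyPref_iff] at ha hb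
  subst ha hb
  exact absurd hab (lt_irrefl _)

end OnlyPref

section Rounds

variable {E : Prio I S}

noncomputable def roundProfile (A : S → Prop) [DecidablePred A] (P : I → Pref S)
    (μ : Matching I S) : I → Pref S :=
  fun j => if μ j = none then trunc A (P j) else trunc (fun _ => False) (P j)

def glue (μ ν : Matching I S) : Matching I S := fun i => (μ i).or (ν i)

def restrict (μ : Matching I S) (A : S → Prop) [DecidablePred A] : Matching I S :=
  fun i => (μ i).filter fun s => decide (A s)

variable {A B : S → Prop} [DecidablePred A] [DecidablePred B] {P : I → Pref S}
  {μ ν κ : Matching I S} {j : I} {s : S}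

lemma glue_of_eq_some (h : μ j = some s) : glue μ ν j = some s := by
  simp [glue, h]

lemma glue_of_eq_none (h : μ j = none) : glue μ ν j = ν j := by
  simp [glue, h]

lemma glue_eq_none_iff : glue μ ν j = none ↔ μ j = none ∧ ν j = none :=
  Option.or_eq_none_iff

lemma glue_assoc (ρ : Matching I S) : glue μ (glue ν ρ) = glue (glue μ ν) ρ :=
  funext fun _ => Option.or_assoc.symm

lemma assigned_glue_of_left (h : ∀ j, ν j ≠ some s) :
    assigned (glue μ ν) s = assigned μ s := by
  ext j
  cases hj : μ j <;> simp [assigned, glue, hj, h j]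

lemma assigned_glue_of_right (h : ∀ j, μ j ≠ some s)
    (h' : ∀ j, ν j = some s → μ j = none) :
    assigned (glue μ ν) s = assigned ν s := by
  ext j
  cases hj : μ j with
  | none => simp [assigned, glue, hj]
  | some x =>
    have hx : x ≠ s := fun hxs => h j (hxs ▸ hj)
    have hν : ν j ≠ some s := fun hνj => by simp [h' j hνj] at hj
    simp [assigned, glue, hj, hx, hν]

lemma Feasible.glue (hμ : Feasible E μ) (hν : Feasible E ν)
    (h : ∀ s j j', μ j = some s → ν j' ≠ some s) : Feasible E (glue μ ν) := fun s => by
  by_cases hs : ∃ j, μ j = some s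
  · obtain ⟨j, hj⟩ := hs
    rw [assigned_glue_of_left fun j' => h s j j' hj]
    exact hμ s
  · simp only [not_exists] at hs
    refine (card_le_card fun j hj => ?_).trans (hν s)
    simp only [assigned, mem_filter, mem_univ, true_and] at hj ⊢
    cases hμj : μ j with
    | none => rwa [glue_of_eq_none hμj] at hj
    | some x => exact absurd (hμj ▸ glue_of_eq_some hμj ▸ hj) (hs j)

lemma restrict_eq_some : restrict μ A j = some s ↔ μ j = some s ∧ A s := by
  simp [restrict, Option.filter_eq_some_iff]

lemma assigned_restrict (hA : A s) : assigned (restrict μ A) s = assigned μ s := by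
  ext j
  simp [assigned, restrict_eq_some, hA]

lemma Feasible.restrict (h : Feasible E μ) : Feasible E (restrict μ A) := fun s =>
  (card_le_card fun j hj => by
    simp only [assigned, mem_filter, mem_univ, true_and, restrict_eq_some] at hj ⊢
    exact hj.1).trans (h s)

lemma roundProfile_of_eq_none (h : μ j = none) : roundProfile A P μ j = trunc A (P j) :=
  if_pos h

lemma roundProfile_acceptsNothing (h : μ j ≠ none) : (roundProfile A P μ j).AcceptsNothing := by
  rw [roundProfile, if_neg h]
  exact trunc_false_acceptsNothing _

lemma roundProfile_rank (h : μ j = none) {x : Option S} (hx : goodB A x = true) :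
    (roundProfile A P μ j).rank x = (P j).rank x := by
  rw [roundProfile_of_eq_none h, trunc_rank_of_goodB _ hx]

lemma acceptable_roundProfile_iff :
    (roundProfile A P μ j).Acceptable s ↔ μ j = none ∧ A s ∧ (P j).Acceptable s := by
  by_cases h : μ j = none
  · rw [roundProfile_of_eq_none h, acceptable_trunc_iff]
    exact ⟨fun h' => ⟨h, h'⟩, fun h' => h'.2⟩
  · exact iff_of_false (roundProfile_acceptsNothing h s) fun h' => h h'.1

lemma indivRat_roundProfile_iff : IndivRat (roundProfile A P μ) κ ↔
    ∀ j s, κ j = some s → μ j = none ∧ A s ∧ (P j).Acceptable s := by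
  refine forall_congr' fun j => ?_
  cases hj : κ j with
  | none => simp
  | some s =>
    simp only [Option.some.injEq, forall_eq', ← Pref.acceptable_iff_rank_le]
    exact acceptable_roundProfile_iff

lemma goodB_of_indivRat (h : IndivRat (roundProfile A P μ) κ) (j : I) :
    goodB A (κ j) = true := by
  cases hj : κ j with
  | none => rfl
  | some s => exact goodB_some.2 (indivRat_roundProfile_iff.1 h j s hj).2.1

lemma DA_roundProfile_eq_some (h : DA E (roundProfile A P μ) j = some s) :
    μ j = none ∧ A s ∧ (P j).Acceptable s :=
  indivRat_roundProfile_iff.1 (DA_stable E _).2.1 j s h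

lemma roundProfile_congr (hAB : ∀ s, A s ↔ B s) (P : I → Pref S) (μ : Matching I S) :
    roundProfile A P μ = roundProfile B P μ :=
  funext fun j => by simp only [roundProfile, trunc_congr hAB]

lemma glue_DA_roundProfile_of_forall_not {E : Prio I S} (hA : ∀ s, ¬ A s) (P : I → Pref S)
    (μ : Matching I S) : glue μ (DA E (roundProfile A P μ)) = μ := by
  funext j
  cases hj : μ j with
  | none =>
    rw [glue_of_eq_none hj]
    exact DA_eq_none_of_acceptsNothing fun s h => hA s (acceptable_roundProfile_iff.1 h).2.1
  | some s => rw [glue_of_eq_some hj]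

lemma not_blocks_of_stable {V W : I → Pref S} (hst : Stable E W ν)
    (hass : assigned μ s = assigned ν s)
    (hpref : (V j).rank (some s) < (V j).rank (μ j) → (W j).rank (some s) < (W j).rank (ν j)) :
    ¬ Blocks E V μ j s := by
  rintro ⟨hp, hcond⟩
  refine hst.2.2 j s ⟨hpref hp, ?_⟩
  rcases hcond with hvac | ⟨l, hl, hhigh⟩
  · exact Or.inl (hass ▸ hvac)
  · refine Or.inr ⟨l, ?_, hhigh⟩
    have : l ∈ assigned ν s := hass ▸ by simp [assigned, hl]
    simpa [assigned] using this

end Rounds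

section Split

/- A joint round over the schools in `A ∪ B` versus a round over `A` followed by a round over
`B` for the students it leaves unmatched, when every student ranks his acceptable `A`-schools
above his acceptable `B`-schools. The glued outcome of the two rounds is stable in the joint
round, while the `A`- and `B`-parts of the joint outcome are stable in the separate rounds;
student-optimality on both sides then forces equality. -/

variable {E : Prio I S} {A B : S → Prop} [DecidablePred A] [DecidablePred B]
  {P : I → Pref S} {μ₀ : Matching I S}

def Pref.RanksBefore (p : Pref S) (A B : S → Prop) : Prop :=
  ∀ a b, A a → B b → p.Acceptable a → p.Acceptable b → p.rank (some a) < p.rank (some b)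

lemma roundProfile_rank_lt_iff {C D : S → Prop} [DecidablePred C] [DecidablePred D]
    {μ μ' : Matching I S} {j : I} (hj : μ j = none) (hj' : μ' j = none) {x y : Option S}
    (hxC : goodB C x = true) (hyC : goodB C y = true) (hxD : goodB D x = true)
    (hyD : goodB D y = true) :
    (roundProfile C P μ j).rank x < (roundProfile C P μ j).rank y ↔
      (roundProfile D P μ' j).rank x < (roundProfile D P μ' j).rank y := by
  rw [roundProfile_rank hj hxC, roundProfile_rank hj hyC, roundProfile_rank hj' hxD,
    roundProfile_rank hj' hyD]

lemma goodB_or_left {x : Option S} (h : goodB A x = true) :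
    goodB (fun s => A s ∨ B s) x = true := by
  cases x <;> simp_all

lemma goodB_or_right {x : Option S} (h : goodB B x = true) :
    goodB (fun s => A s ∨ B s) x = true := by
  cases x <;> simp_all

lemma stable_glue (hdisj : ∀ s, A s → ¬ B s)
    (halign : ∀ j, (P j).RanksBefore A B)
    {ν ν₂ : Matching I S} (hν : Stable E (roundProfile A P μ₀) ν)
    (hν₂ : Stable E (roundProfile B P (glue μ₀ ν)) ν₂) :
    Stable E (roundProfile (fun s => A s ∨ B s) P μ₀) (glue ν ν₂) := by
  have hνval := indivRat_roundProfile_iff.1 hν.2.1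
  have hν₂val := indivRat_roundProfile_iff.1 hν₂.2.1
  have hIR : IndivRat (roundProfile (fun s => A s ∨ B s) P μ₀) (glue ν ν₂) := by
    refine indivRat_roundProfile_iff.2 fun j s hj => ?_
    cases hνj : ν j with
    | some a =>
      rw [glue_of_eq_some hνj] at hj
      cases hj
      obtain ⟨h₀, hA, hacc⟩ := hνval j s hνj
      exact ⟨h₀, Or.inl hA, hacc⟩
    | none =>
      rw [glue_of_eq_none hνj] at hj
      obtain ⟨h₀, hB, hacc⟩ := hν₂val j s hj
      exact ⟨(glue_eq_none_iff.1 h₀).1, Or.inr hB, hacc⟩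
  refine ⟨hν.1.glue hν₂.1 fun s j j' hj hj' =>
    hdisj s (hνval j s hj).2.1 (hν₂val j' s hj').2.1, hIR, fun i s hblock => ?_⟩
  obtain ⟨h₀, hAB, haccs⟩ := acceptable_roundProfile_iff.1 (hblock.1.trans_le (hIR i))
  rcases hAB with hA | hB
  · refine not_blocks_of_stable hν
      (assigned_glue_of_left fun j hj => hdisj s hA (hν₂val j s hj).2.1) (fun hpref => ?_) hblock
    cases hνi : ν i with
    | none => exact acceptable_roundProfile_iff.2 ⟨h₀, hA, haccs⟩
    | some a =>
      rw [glue_of_eq_some hνi] at hpref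
      have hA' := (hνval i a hνi).2.1
      exact (roundProfile_rank_lt_iff h₀ h₀ (goodB_or_left (goodB_some.2 hA))
        (goodB_or_left (goodB_some.2 hA')) (goodB_some.2 hA) (goodB_some.2 hA')).1 hpref
  · have hνi : ν i = none := by
      cases hνi : ν i with
      | none => rfl
      | some a =>
        obtain ⟨-, hA, hacca⟩ := hνval i a hνi
        have hpref := hblock.1
        rw [glue_of_eq_some hνi, roundProfile_rank h₀ (goodB_or_right (goodB_some.2 hB)),
          roundProfile_rank h₀ (goodB_or_left (goodB_some.2 hA))] at hpref
        exact absurd (halign i a s hA hB hacca haccs) (lt_asymm hpref)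
    have h₁ : glue μ₀ ν i = none := glue_eq_none_iff.2 ⟨h₀, hνi⟩
    have hass : assigned (glue ν ν₂) s = assigned ν₂ s :=
      assigned_glue_of_right (fun j hj => hdisj s (hνval j s hj).2.1 hB)
        fun j hj => (glue_eq_none_iff.1 (hν₂val j s hj).1).2
    refine not_blocks_of_stable hν₂ hass (fun hpref => ?_) hblock
    rw [glue_of_eq_none hνi] at hpref
    have hgood := goodB_of_indivRat hν₂.2.1 i
    exact (roundProfile_rank_lt_iff h₀ h₁ (goodB_or_right (goodB_some.2 hB))
      (goodB_or_right hgood) (goodB_some.2 hB) hgood).1 hpref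

lemma stable_restrict_left
    (halign : ∀ j, (P j).RanksBefore A B)
    {μ : Matching I S}
    (hμ : Stable E (roundProfile (fun s => A s ∨ B s) P μ₀) μ) :
    Stable E (roundProfile A P μ₀) (restrict μ A) := by
  have hμval := indivRat_roundProfile_iff.1 hμ.2.1
  have hIR : IndivRat (roundProfile A P μ₀) (restrict μ A) := by
    refine indivRat_roundProfile_iff.2 fun j s hj => ?_
    obtain ⟨hj, hA⟩ := restrict_eq_some.1 hj
    exact ⟨(hμval j s hj).1, hA, (hμval j s hj).2.2⟩
  refine ⟨hμ.1.restrict, hIR, fun j a hblock => ?_⟩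
  obtain ⟨h₀, hA, hacca⟩ := acceptable_roundProfile_iff.1 (hblock.1.trans_le (hIR j))
  refine not_blocks_of_stable hμ (assigned_restrict hA) (fun hpref => ?_) hblock
  cases hμj : μ j with
  | none => exact acceptable_roundProfile_iff.2 ⟨h₀, Or.inl hA, hacca⟩
  | some x =>
    obtain ⟨-, hx, haccx⟩ := hμval j x hμj
    rcases hx with hAx | hBx
    · rw [(restrict_eq_some.2 ⟨hμj, hAx⟩ : restrict μ A j = some x)] at hpref
      exact (roundProfile_rank_lt_iff h₀ h₀ (goodB_some.2 hA) (goodB_some.2 hAx)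
        (goodB_or_left (goodB_some.2 hA)) (goodB_or_left (goodB_some.2 hAx))).1 hpref
    · rw [roundProfile_rank h₀ (goodB_or_left (goodB_some.2 hA)),
        roundProfile_rank h₀ (goodB_or_right (goodB_some.2 hBx))]
      exact halign j a x hA hBx hacca haccx

lemma stable_restrict_right (hdisj : ∀ s, A s → ¬ B s) {μ ν : Matching I S}
    (hμ : Stable E (roundProfile (fun s => A s ∨ B s) P μ₀) μ) (hν : restrict μ A = ν) :
    Stable E (roundProfile B P (glue μ₀ ν)) (restrict μ B) := by
  have hμval := indivRat_roundProfile_iff.1 hμ.2.1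
  have hνj : ∀ j x, μ j = some x → B x → ν j = none := fun j x hj hB => by
    cases h : ν j with
    | none => rfl
    | some y =>
      obtain ⟨hy, hA⟩ := restrict_eq_some.1 (hν ▸ h)
      rw [hj] at hy
      cases hy
      exact absurd hB (hdisj x hA)
  have hIR : IndivRat (roundProfile B P (glue μ₀ ν)) (restrict μ B) := by
    refine indivRat_roundProfile_iff.2 fun j s hj => ?_
    obtain ⟨hj, hB⟩ := restrict_eq_some.1 hj
    exact ⟨glue_eq_none_iff.2 ⟨(hμval j s hj).1, hνj j s hj hB⟩, hB, (hμval j s hj).2.2⟩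
  refine ⟨hμ.1.restrict, hIR, fun j b hblock => ?_⟩
  obtain ⟨h₁, hB, haccb⟩ := acceptable_roundProfile_iff.1 (hblock.1.trans_le (hIR j))
  obtain ⟨h₀, hνj'⟩ := glue_eq_none_iff.1 h₁
  refine not_blocks_of_stable hμ (assigned_restrict hB) (fun hpref => ?_) hblock
  cases hμj : μ j with
  | none => exact acceptable_roundProfile_iff.2 ⟨h₀, Or.inr hB, haccb⟩
  | some x =>
    have hBx : B x := by
      rcases (hμval j x hμj).2.1 with hAx | hBx
      · have := (restrict_eq_some.2 ⟨hμj, hAx⟩ : restrict μ A j = some x)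
        rw [hν, hνj'] at this
        cases this
      · exact hBx
    rw [(restrict_eq_some.2 ⟨hμj, hBx⟩ : restrict μ B j = some x)] at hpref
    exact (roundProfile_rank_lt_iff h₁ h₀ (goodB_some.2 hB) (goodB_some.2 hBx)
      (goodB_or_right (goodB_some.2 hB)) (goodB_or_right (goodB_some.2 hBx))).1 hpref

lemma restrict_DA_roundProfile_or (hdisj : ∀ s, A s → ¬ B s)
    (halign : ∀ j, (P j).RanksBefore A B) :
    restrict (DA E (roundProfile (fun s => A s ∨ B s) P μ₀)) A =
      DA E (roundProfile A P μ₀) := by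
  have hstA := stable_restrict_left halign
    (DA_stable E (roundProfile (fun s => A s ∨ B s) P μ₀))
  have hμval := indivRat_roundProfile_iff.1
    (DA_stable E (roundProfile (fun s => A s ∨ B s) P μ₀)).2.1
  have hνval := indivRat_roundProfile_iff.1 (DA_stable E (roundProfile A P μ₀)).2.1
  have hνle := rank_DA_le hstA
  have hμle := rank_DA_le (stable_glue hdisj halign (DA_stable E (roundProfile A P μ₀))
    (DA_stable E (roundProfile B P (glue μ₀ (DA E (roundProfile A P μ₀))))))
  set μ := DA E (roundProfile (fun s => A s ∨ B s) P μ₀)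
  set ν := DA E (roundProfile A P μ₀)
  -- `ν` beats the `A`-part of `μ` in the `A`-round, and `μ` beats the glued matching,
  -- whose `A`-part is `ν`, in the joint round
  funext j
  cases hνj : ν j with
  | some a =>
    obtain ⟨h₀, hA, hacca⟩ := hνval j a hνj
    have h₁ := hμle j
    rw [glue_of_eq_some hνj] at h₁
    cases hμj : μ j with
    | none =>
      rw [hμj] at h₁
      exact absurd (acceptable_roundProfile_iff.2 ⟨h₀, Or.inl hA, hacca⟩) (not_lt.2 h₁)
    | some x =>
      obtain ⟨-, hx, haccx⟩ := hμval j x hμj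
      rw [hμj, roundProfile_rank h₀ ((goodB_some (A := fun s => A s ∨ B s)).2 hx),
        roundProfile_rank h₀ (goodB_or_left (goodB_some.2 hA))] at h₁
      have hAx : A x :=
        hx.resolve_right fun hBx => absurd (halign j a x hA hBx hacca haccx) (not_lt.2 h₁)
      have hres : restrict μ A j = some x := restrict_eq_some.2 ⟨hμj, hAx⟩
      have h₂ := hνle j
      rw [hνj, hres, roundProfile_rank h₀ (goodB_some.2 hA),
        roundProfile_rank h₀ (goodB_some.2 hAx)] at h₂
      rw [hres, (P j).inj (le_antisymm h₁ h₂)]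
  | none =>
    cases hres : restrict μ A j with
    | none => rfl
    | some x =>
      have h₂ := hνle j
      rw [hνj, hres] at h₂
      exact absurd (acceptable_roundProfile_iff.2
        (indivRat_roundProfile_iff.1 hstA.2.1 j x hres)) (not_lt.2 h₂)

theorem DA_roundProfile_or (hdisj : ∀ s, A s → ¬ B s)
    (halign : ∀ j, (P j).RanksBefore A B) :
    DA E (roundProfile (fun s => A s ∨ B s) P μ₀) =
      glue (DA E (roundProfile A P μ₀))
        (DA E (roundProfile B P (glue μ₀ (DA E (roundProfile A P μ₀))))) := by
  have hres := restrict_DA_roundProfile_or hdisj halign (E := E) (μ₀ := μ₀)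
  have hstB := stable_restrict_right hdisj
    (DA_stable E (roundProfile (fun s => A s ∨ B s) P μ₀)) hres
  have hμval := indivRat_roundProfile_iff.1
    (DA_stable E (roundProfile (fun s => A s ∨ B s) P μ₀)).2.1
  have hν₂good := goodB_of_indivRat
    (DA_stable E (roundProfile B P (glue μ₀ (DA E (roundProfile A P μ₀))))).2.1
  have hμle := rank_DA_le (stable_glue hdisj halign (DA_stable E (roundProfile A P μ₀))
    (DA_stable E (roundProfile B P (glue μ₀ (DA E (roundProfile A P μ₀))))))
  have hν₂le := rank_DA_le hstB
  set μ := DA E (roundProfile (fun s => A s ∨ B s) P μ₀)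
  set ν := DA E (roundProfile A P μ₀)
  funext j
  cases hνj : ν j with
  | some a =>
    rw [glue_of_eq_some hνj]
    exact (restrict_eq_some.1 (hres ▸ hνj)).1
  | none =>
    rw [glue_of_eq_none hνj]
    by_cases h₀ : μ₀ j = none
    · have h₁ : glue μ₀ ν j = none := glue_eq_none_iff.2 ⟨h₀, hνj⟩
      have hμB : restrict μ B j = μ j := by
        cases hμj : μ j with
        | none => simp [restrict, hμj]
        | some x =>
          refine restrict_eq_some.2 ⟨hμj, (hμval j x hμj).2.1.resolve_left fun hAx => ?_⟩
          have := (restrict_eq_some.2 ⟨hμj, hAx⟩ : restrict μ A j = some x)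
          rw [hres, hνj] at this
          cases this
      have hgood := goodB_of_indivRat hstB.2.1 j
      have hgood₂ := hν₂good j
      rw [hμB] at hgood
      have h₂ := hν₂le j
      have h₃ := hμle j
      rw [hμB, roundProfile_rank h₁ hgood₂, roundProfile_rank h₁ hgood] at h₂
      rw [glue_of_eq_none hνj, roundProfile_rank h₀ (goodB_or_right hgood),
        roundProfile_rank h₀ (goodB_or_right hgood₂)] at h₃
      exact (P j).inj (le_antisymm h₃ h₂)
    · rw [show μ j = none from DA_eq_none_of_acceptsNothing (roundProfile_acceptsNothing h₀),
        DA_eq_none_of_acceptsNothing (roundProfile_acceptsNothing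
          fun h => h₀ (glue_eq_none_iff.1 h).1)]

end Split

section TDA

variable {E : Prio I S} {t t' : S → ℕ} {P Q : I → Pref S}

lemma TDAaux_succ (k : ℕ) :
    TDAaux E t Q (k + 1) =
      glue (TDAaux E t Q k) (DA E (roundProfile (fun s => t s = k + 1) Q (TDAaux E t Q k))) := by
  funext i
  simp only [TDAaux, glue]
  cases TDAaux E t Q k i <;> rfl

lemma TDAaux_eq_some_of_le {k l : ℕ} {i : I} {s : S} (h : TDAaux E t Q k i = some s)
    (hkl : k ≤ l) : TDAaux E t Q l i = some s := by
  induction l, hkl using Nat.le_induction with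
  | base => exact h
  | succ l _ ih => rw [TDAaux_succ, glue_of_eq_some ih]

lemma TDAaux_eq_some {k : ℕ} {i : I} {s : S} (h : TDAaux E t Q k i = some s) :
    (Q i).Acceptable s ∧ t s ≤ k ∧ TDAaux E t Q (t s) i = some s ∧
      ∀ m < t s, TDAaux E t Q m i = none := by
  induction k with
  | zero => cases h
  | succ k ih =>
    rw [TDAaux_succ] at h
    cases hk : TDAaux E t Q k i with
    | some x =>
      rw [glue_of_eq_some hk] at h
      cases h
      obtain ⟨h₁, h₂, h₃, h₄⟩ := ih hk
      exact ⟨h₁, by omega, h₃, h₄⟩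
    | none =>
      rw [glue_of_eq_none hk] at h
      obtain ⟨-, hts, hacc⟩ := DA_roundProfile_eq_some h
      refine ⟨hacc, hts.le, by rw [hts, TDAaux_succ, glue_of_eq_none hk, h], fun m hm => ?_⟩
      cases hm' : TDAaux E t Q m i with
      | none => rfl
      | some y => simp [TDAaux_eq_some_of_le hm' (by omega : m ≤ k)] at hk

lemma TDAaux_eq_none_of_acceptsNothing {i : I} (h : (Q i).AcceptsNothing) (k : ℕ) :
    TDAaux E t Q k i = none := by
  induction k with
  | zero => rfl
  | succ k ih =>
    rw [TDAaux_succ, glue_of_eq_none ih]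
    refine DA_eq_none_of_acceptsNothing ?_
    rw [roundProfile_of_eq_none ih]
    exact trunc_acceptsNothing fun s _ => h s

lemma TDAaux_congr (h : ∀ j m, AgreeOn (fun s => t s = m) (P j) (Q j)) (k : ℕ) :
    TDAaux E t P k = TDAaux E t Q k := by
  induction k with
  | zero => rfl
  | succ k ih =>
    rw [TDAaux_succ, TDAaux_succ, ih]
    congr 1
    refine DA_congr fun j => ?_
    by_cases hj : TDAaux E t Q k j = none
    · rw [roundProfile_of_eq_none hj, roundProfile_of_eq_none hj]
      exact (h j (k + 1)).trunc_equivalent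
    · exact Pref.equivalent_of_acceptsNothing (roundProfile_acceptsNothing hj)
        (roundProfile_acceptsNothing hj)

end TDA

section Refinement

variable (t t' : S → ℕ)

noncomputable def blockEnd (k : ℕ) : ℕ := (univ.filter fun s => t' s ≤ k).sup t

variable {t t'}

lemma le_blockEnd {s : S} {k : ℕ} (h : t' s ≤ k) : t s ≤ blockEnd t t' k :=
  le_sup (mem_filter.2 ⟨mem_univ s, h⟩)

lemma blockEnd_mono {k l : ℕ} (hkl : k ≤ l) : blockEnd t t' k ≤ blockEnd t t' l :=
  sup_mono fun s hs => mem_filter.2 ⟨mem_univ s, (mem_filter.1 hs).2.trans hkl⟩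

lemma blockEnd_zero (ht' : ∀ s, 1 ≤ t' s) : blockEnd t t' 0 = 0 := by
  rw [blockEnd, filter_false_of_mem fun s _ => by have := ht' s; omega, sup_empty]
  rfl

lemma blockEnd_top : blockEnd t t' (univ.sup t') = univ.sup t :=
  le_antisymm (sup_mono (filter_subset _ _))
    (Finset.sup_le fun s _ => le_blockEnd (le_sup (mem_univ s)))

lemma blockEnd_lt (ht : ∀ s, 1 ≤ t s) (href : Refines t t') {s : S} {k : ℕ} (hs : k < t' s) :
    blockEnd t t' k < t s := by
  rcases (univ.filter fun s => t' s ≤ k).eq_empty_or_nonempty with hemp | hne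
  · rw [blockEnd, hemp, sup_empty]
    exact ht s
  · obtain ⟨s₀, hs₀, heq⟩ := exists_mem_eq_sup _ hne t
    rw [blockEnd, heq]
    exact href s s₀ (lt_of_le_of_lt (mem_filter.1 hs₀).2 hs)

lemma tier_eq_of_blockEnd (ht : ∀ s, 1 ≤ t s) (href : Refines t t') {s : S} {k : ℕ}
    (hlow : blockEnd t t' k < t s) (hhigh : t s ≤ blockEnd t t' (k + 1)) : t' s = k + 1 := by
  have h₁ : k < t' s := by
    by_contra! h
    exact absurd (le_blockEnd h) (not_le.2 hlow)
  have h₂ : t' s ≤ k + 1 := by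
    by_contra! h
    exact absurd (blockEnd_lt ht href h) (not_lt.2 hhigh)
  omega

variable {E : Prio I S} {P : I → Pref S}

lemma DA_roundProfile_peel (hal : ∀ j, TierAligned t (P j)) (C : S → Prop) [DecidablePred C]
    (r : ℕ) (M : Matching I S) :
    DA E (roundProfile (fun s => C s ∧ r < t s) P M) =
      glue (DA E (roundProfile (fun s => C s ∧ t s = r + 1) P M))
        (DA E (roundProfile (fun s => C s ∧ r + 1 < t s) P
          (glue M (DA E (roundProfile (fun s => C s ∧ t s = r + 1) P M))))) := by
  rw [← DA_roundProfile_or (fun s ha hb => by omega)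
    fun j a b ha hb hacca haccb => hal j a b hacca haccb (by omega)]
  have hiff : ∀ s, (C s ∧ r < t s) ↔ (C s ∧ t s = r + 1) ∨ (C s ∧ r + 1 < t s) := by
    intro s
    constructor
    · rintro ⟨hC, h⟩
      rcases Nat.lt_or_ge (r + 1) (t s) with h' | h'
      · exact Or.inr ⟨hC, h'⟩
      · exact Or.inl ⟨hC, by omega⟩
    · rintro (⟨hC, h⟩ | ⟨hC, h⟩) <;> exact ⟨hC, by omega⟩
  exact congrArg _ (roundProfile_congr hiff P M)

variable (ht : ∀ s, 1 ≤ t s) (href : Refines t t') (hal : ∀ j, TierAligned t (P j))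
include ht href hal

lemma TDAaux_succ_eq_within_block {k : ℕ}
    (hk : TDAaux E t' P k = TDAaux E t P (blockEnd t t' k)) {d : ℕ}
    (hd : blockEnd t t' k + d ≤ blockEnd t t' (k + 1)) :
    TDAaux E t' P (k + 1) = glue (TDAaux E t P (blockEnd t t' k + d))
      (DA E (roundProfile (fun s => t' s = k + 1 ∧ blockEnd t t' k + d < t s) P
        (TDAaux E t P (blockEnd t t' k + d)))) := by
  induction d with
  | zero =>
    rw [add_zero, TDAaux_succ, hk]
    refine congrArg _ (congrArg _ (roundProfile_congr (fun s => ?_) P _))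
    exact ⟨fun h => ⟨h, blockEnd_lt ht href (by omega)⟩, And.left⟩
  | succ d ih =>
    have hr : ∀ s, (t' s = k + 1 ∧ t s = blockEnd t t' k + d + 1) ↔
        t s = blockEnd t t' k + d + 1 :=
      fun s => ⟨And.right, fun h => ⟨tier_eq_of_blockEnd ht href (by omega) (by omega), h⟩⟩
    rw [ih (by omega), DA_roundProfile_peel hal, glue_assoc, roundProfile_congr hr,
      ← TDAaux_succ, ← add_assoc]

theorem TDAaux_eq_TDAaux_blockEnd (ht' : ∀ s, 1 ≤ t' s) (k : ℕ) :
    TDAaux E t' P k = TDAaux E t P (blockEnd t t' k) := by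
  induction k with
  | zero => rw [blockEnd_zero ht']; rfl
  | succ k ih =>
    have hle := blockEnd_mono (t := t) (t' := t') (Nat.le_add_right k 1)
    rw [TDAaux_succ_eq_within_block ht href hal ih
      (d := blockEnd t t' (k + 1) - blockEnd t t' k) (by omega), Nat.add_sub_cancel' hle]
    exact glue_DA_roundProfile_of_forall_not (fun s ⟨hs, hlt⟩ =>
      absurd (le_blockEnd hs.le) (not_le.2 hlt)) P _

theorem TDA_eq_of_refines (ht' : ∀ s, 1 ≤ t' s) : TDA E t' P = TDA E t P := by
  rw [TDA, TDA, TDAaux_eq_TDAaux_blockEnd ht href hal ht', blockEnd_top]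

lemma TDA_eq_of_agreeOn (ht' : ∀ s, 1 ≤ t' s) {Q : I → Pref S}
    (hag : ∀ j m, AgreeOn (fun s => t s = m) (P j) (Q j)) : TDA E t' P = TDA E t Q := by
  rw [TDA_eq_of_refines ht href hal ht', TDA, TDA, TDAaux_congr hag]

end Refinement

section Deviation

variable {E : Prio I S}

lemma Silences.trans {P P' P'' : I → Pref S} (h : Silences P P') (h' : Silences P' P'') :
    Silences P P'' := fun j =>
  (h j).elim (fun hj => (h' j).imp (hj.trans) (hj ▸ ·)) Or.inr

lemma silences_roundProfile {C : S → Prop} [DecidablePred C] (P : I → Pref S)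
    {M₁ M₂ : Matching I S} (h : ∀ l, M₁ l = none → M₂ l = none) :
    Silences (roundProfile C P M₁) (roundProfile C P M₂) := fun l => by
  by_cases hl : M₁ l = none
  · exact Or.inl (by rw [roundProfile_of_eq_none hl, roundProfile_of_eq_none (h l hl)])
  · exact Or.inr (roundProfile_acceptsNothing hl)

lemma roundProfile_update {C : S → Prop} [DecidablePred C] {P : I → Pref S} {M : Matching I S}
    {i : I} (hi : M i = none) (p : Pref S) :
    roundProfile C (update P i p) M = update (roundProfile C P M) i (trunc C p) := by
  funext l
  rcases eq_or_ne l i with rfl | hl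
  · rw [update_self, roundProfile_of_eq_none hi, update_self]
  · rw [update_of_ne hl, roundProfile, roundProfile, update_of_ne hl]

lemma silences_roundProfile_update {C : S → Prop} [DecidablePred C] {P : I → Pref S}
    {M : Matching I S} {i : I} (hi : M i = none) {p : Pref S} (hp : (trunc C p).AcceptsNothing)
    (q : Pref S) :
    Silences (roundProfile C (update P i p) M) (roundProfile C (update P i q) M) := by
  rw [roundProfile_update hi, roundProfile_update hi]
  intro j
  rcases eq_or_ne j i with rfl | hj
  · exact Or.inr (by rwa [update_self])
  · exact Or.inl (by rw [update_of_ne hj, update_of_ne hj])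

lemma Stable.update_of_top {P : I → Pref S} {ν : Matching I S} (hν : Stable E P ν) {i : I}
    {s₀ : S} (hi : ν i = some s₀) {π : Pref S}
    (htop : ∀ x, π.rank (some s₀) ≤ π.rank x) :
    Stable E (update P i π) ν := by
  obtain ⟨hfeas, hIR, hnb⟩ := hν
  refine ⟨hfeas, fun j => ?_, fun j s ⟨hpref, hcond⟩ => ?_⟩
  · rcases eq_or_ne j i with rfl | hj
    · rw [update_self, hi]
      exact htop none
    · rw [update_of_ne hj]
      exact hIR j
  · rcases eq_or_ne j i with rfl | hj
    · rw [update_self, hi] at hpref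
      exact absurd (htop (some s)) (not_le.2 hpref)
    · rw [update_of_ne hj] at hpref
      exact hnb j s ⟨hpref, hcond⟩

variable {t : S → ℕ} {Pal : I → Pref S} {i : I}

lemma TDAaux_rank_le_none (Q : I → Pref S) (k : ℕ) (j : I) :
    (Q j).rank (TDAaux E t Q k j) ≤ (Q j).rank none := by
  cases h : TDAaux E t Q k j with
  | none => exact le_rfl
  | some s => exact (TDAaux_eq_some h).1.le

lemma TDAaux_update_eq_some {p : Pref S} {j : I} (hj : j ≠ i) {m : ℕ} {s : S}
    (h : TDAaux E t (update Pal i p) m j = some s) : (Pal j).Acceptable s ∧ t s ≤ m := by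
  have := TDAaux_eq_some h
  rw [update_of_ne hj] at this
  exact ⟨this.1, this.2.1⟩

variable (Pal i) in
def BetterOffExcept (μ ν : Matching I S) : Prop :=
  ∀ j ≠ i, (Pal j).rank (μ j) ≤ (Pal j).rank (ν j)

variable {p q : Pref S} {m : ℕ}

lemma BetterOffExcept.TDAaux_eq_none
    (hdom : BetterOffExcept Pal i (TDAaux E t (update Pal i p) m) (TDAaux E t (update Pal i q) m))
    (hi : TDAaux E t (update Pal i q) m i = none) {l : I}
    (hl : TDAaux E t (update Pal i p) m l = none) : TDAaux E t (update Pal i q) m l = none := by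
  rcases eq_or_ne l i with rfl | hli
  · exact hi
  · have hadm := TDAaux_rank_le_none (E := E) (t := t) (update Pal i q) m l
    rw [update_of_ne hli] at hadm
    have := hdom l hli
    rw [hl] at this
    exact Pref.eq_none_of_rank_none_le hadm this

lemma TDAaux_succ_update_eq_none (hp : ∀ s, t s = m + 1 → ¬ p.Acceptable s)
    (h : TDAaux E t (update Pal i p) m i = none) :
    TDAaux E t (update Pal i p) (m + 1) i = none := by
  rw [TDAaux_succ, glue_of_eq_none h]
  refine DA_eq_none_of_acceptsNothing ?_
  rw [roundProfile_of_eq_none h, update_self]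
  exact trunc_acceptsNothing hp

/-- The others face the round with fewer competitors, and one matched earlier only in the first
run holds a school of an earlier tier, which he prefers by alignment. -/
lemma BetterOffExcept.succ (hal : ∀ j, TierAligned t (Pal j))
    (hp : ∀ s, t s = m + 1 → ¬ p.Acceptable s) (hi : TDAaux E t (update Pal i q) m i = none)
    (hdom : BetterOffExcept Pal i (TDAaux E t (update Pal i p) m) (TDAaux E t (update Pal i q) m)) :
    BetterOffExcept Pal i (TDAaux E t (update Pal i p) (m + 1))
      (TDAaux E t (update Pal i q) (m + 1)) := by
  have hnone := fun l => hdom.TDAaux_eq_none (l := l) hi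
  set M₁ := TDAaux E t (update Pal i p) m
  set M₂ := TDAaux E t (update Pal i q) m
  have hsil : Silences (roundProfile (fun s => t s = m + 1) (update Pal i p) M₁)
      (roundProfile (fun s => t s = m + 1) (update Pal i q) M₂) :=
    (silences_roundProfile _ hnone).trans
      (silences_roundProfile_update hi (trunc_acceptsNothing hp) q)
  intro j hj
  rw [TDAaux_succ, TDAaux_succ]
  cases hM₁ : M₁ j with
  | some a =>
    obtain ⟨hacca, hta⟩ := TDAaux_update_eq_some hj hM₁
    rw [glue_of_eq_some hM₁]
    cases hM₂ : M₂ j with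
    | some b =>
      rw [glue_of_eq_some hM₂]
      simpa [hM₁, hM₂] using hdom j hj
    | none =>
      rw [glue_of_eq_none hM₂]
      cases hd : DA E (roundProfile (fun s => t s = m + 1) (update Pal i q) M₂) j with
      | none => exact hacca.le
      | some b =>
        obtain ⟨-, htb, haccb⟩ := DA_roundProfile_eq_some hd
        rw [update_of_ne hj] at haccb
        exact (hal j a b hacca haccb (by omega)).le
  | none =>
    have hM₂ := hnone j hM₁
    rw [glue_of_eq_none hM₁, glue_of_eq_none hM₂]
    have hle := hsil.rank_DA_le (E := E) (j := j) (by
      rw [roundProfile_of_eq_none hM₁, roundProfile_of_eq_none hM₂, update_of_ne hj,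
        update_of_ne hj])
    rwa [roundProfile_rank hM₁ (goodB_of_indivRat (DA_stable E _).2.1 j),
      roundProfile_rank hM₁ (goodB_of_indivRat (DA_stable E _).2.1 j), update_of_ne hj] at hle

lemma TDAaux_succ_update_onlyPref {s₀ : S} (hs₀ : t s₀ = m + 1)
    (h₁ : TDAaux E t (update Pal i (onlyPref s₀)) m i = none)
    (h₂ : TDAaux E t (update Pal i q) m i = none)
    (hnone : ∀ l, TDAaux E t (update Pal i (onlyPref s₀)) m l = none →
      TDAaux E t (update Pal i q) m l = none)
    (h : TDAaux E t (update Pal i q) (m + 1) i = some s₀) :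
    TDAaux E t (update Pal i (onlyPref s₀)) (m + 1) i = some s₀ := by
  set C : S → Prop := fun s => t s = m + 1
  set π := trunc C (onlyPref s₀)
  have hπ : π.rank (some s₀) = 0 := by
    rw [trunc_rank_of_goodB _ ((goodB_some (A := C)).2 hs₀), onlyPref_rank_self]
  have htop : ∀ x, π.rank (some s₀) ≤ π.rank x := fun x => hπ ▸ Nat.zero_le _
  rw [TDAaux_succ, glue_of_eq_none h₂] at h
  -- `s₀` stays stable for `i` once he reports only `s₀`, hence DA still gives it to him
  have hst := (DA_stable E (roundProfile C (update Pal i q) _)).update_of_top h htop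
  rw [← roundProfile_update h₂, update_idem] at hst
  have h₂' :
      DA E (roundProfile C (update Pal i (onlyPref s₀)) (TDAaux E t (update Pal i q) m)) i =
        some s₀ := by
    have := rank_DA_le hst i
    rw [h, roundProfile_of_eq_none h₂, update_self, hπ] at this
    exact π.inj (le_antisymm (this.trans hπ.ge) (htop _))
  have hle := (silences_roundProfile (C := C) (update Pal i (onlyPref s₀)) hnone).rank_DA_le
    (E := E) (j := i) (by rw [roundProfile_of_eq_none h₁, roundProfile_of_eq_none h₂])
  rw [h₂', roundProfile_of_eq_none h₁, update_self, hπ] at hle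
  rw [TDAaux_succ, glue_of_eq_none h₁]
  exact π.inj (le_antisymm (hle.trans hπ.ge) (htop _))

theorem TDAaux_update_onlyPref (hal : ∀ j, TierAligned t (Pal j)) {s₀ : S} {k : ℕ}
    (h : TDAaux E t (update Pal i q) k i = some s₀) :
    TDAaux E t (update Pal i (onlyPref s₀)) k i = some s₀ := by
  obtain ⟨-, hk, hs₀, hbefore⟩ := TDAaux_eq_some h
  have hinv : ∀ m < t s₀, TDAaux E t (update Pal i (onlyPref s₀)) m i = none ∧
      BetterOffExcept Pal i (TDAaux E t (update Pal i (onlyPref s₀)) m)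
        (TDAaux E t (update Pal i q) m) := by
    intro m hm
    induction m with
    | zero => exact ⟨rfl, fun _ _ => le_rfl⟩
    | succ m ih =>
      obtain ⟨h₁, hdom⟩ := ih (by omega)
      have hp : ∀ s, t s = m + 1 → ¬ (onlyPref s₀).Acceptable s := fun s hs hacc => by
        rw [acceptable_onlyPref_iff.1 hacc] at hs
        omega
      exact ⟨TDAaux_succ_update_eq_none hp h₁, hdom.succ hal hp (hbefore m (by omega))⟩
  obtain ⟨m, hm⟩ : ∃ m, t s₀ = m + 1 := by
    refine Nat.exists_eq_add_one.2 (Nat.pos_of_ne_zero fun h0 => ?_)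
    rw [h0] at hs₀
    cases hs₀
  obtain ⟨h₁, hdom⟩ := hinv m (by omega)
  refine TDAaux_eq_some_of_le (hm ▸ ?_) hk
  exact TDAaux_succ_update_onlyPref hm h₁ (hbefore m (by omega))
    (fun l => hdom.TDAaux_eq_none (hbefore m (by omega))) (hm ▸ hs₀)

end Deviation

/-- If `t` refines `t'`, every Nash equilibrium outcome of TDA under `t`
is a Nash equilibrium outcome of TDA under `t'`. -/
theorem TDA_NashOutcomes_nested
    (E : Prio I S) (t t' : S → ℕ) (T T' : ℕ)
    (ht : IsTierStructure t T) (ht' : IsTierStructure t' T')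
    (href : Refines t t')
    (R : I → Pref S) (μ : Matching I S)
    (h : NashOutcome R (TDA E t) μ) :
    NashOutcome R (TDA E t') μ := by
  obtain ⟨Q, hNE, rfl⟩ := h
  have hpos : ∀ s, 1 ≤ t s := fun s => (ht.1 s).1
  have hpos' : ∀ s, 1 ≤ t' s := fun s => (ht'.1 s).1
  set Pal : I → Pref S := fun j => reshuffle t (Q j)
  have hal : ∀ j, TierAligned t (Pal j) := fun j => reshuffle_tierAligned t (Q j)
  have hag : ∀ j m, AgreeOn (fun s => t s = m) (Pal j) (Q j) :=
    fun j => reshuffle_agreeOn t (Q j)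
  have hout : TDA E t' Pal = TDA E t Q := TDA_eq_of_agreeOn hpos href hal hpos' hag
  refine ⟨Pal, fun i q => ?_, hout⟩
  rw [hout]
  cases hdev : TDA E t' (update Pal i q) i with
  | none =>
    have hsilent := TDAaux_eq_none_of_acceptsNothing (E := E) (t := t) (k := univ.sup t)
      (Q := update Q i (trunc (fun _ => False) (Q i))) (i := i)
      (by rw [update_self]; exact trunc_false_acceptsNothing _)
    simpa [TDA, hsilent] using hNE i (trunc (fun _ => False) (Q i))
  | some s₀ =>
    have honly := TDAaux_update_onlyPref (fun j => (hal j).of_refines href) hdev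
    have hal' := (forall_update_iff Pal (a := i) fun _ p => TierAligned t p).2
      ⟨onlyPref_tierAligned t s₀, fun j _ => hal j⟩
    rw [← TDA, TDA_eq_of_agreeOn hpos href hal' hpos'
      fun j m => agreeOn_update (fun j => hag j m) i _ j] at honly
    simpa [honly] using hNE i (onlyPref s₀)
end SchoolChoice
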